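/- Let k, m ≥ 1 be integers and let T = (T_1,…,T_k) be a k-tiling of the Aztec diamond AD_m. Let ρ : ℝ² → ℝ² be the reflection (x,y) ↦ (y,x), and let φ(T) = (ρ(T_1),…,ρ(T_k)). Then φ(T) is again a k-tiling of AD_m, and ν(φ(T)) = (k(k−1)/2)·(m(m+1)/2) − ν(T). -/

import Mathlib

namespace Aztec

/-- A lattice square, identified by its lower-left corner. -/
abbrev Cell : Type := ℤ × ℤ

/-- The unit lattice square with lower-left corner `c` is contained in the
region `{(x, y) : |x| + |y| ≤ m + 1}`, i.e. lies in the Aztec diamond of rank `m`. -/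
def inAD (m : ℕ) (c : Cell) : Prop :=
  max |c.1| |c.1 + 1| + max |c.2| |c.2 + 1| ≤ (m : ℤ) + 1

/-- A domino: either the horizontal `2×1` rectangle made of the lattice squares with
lower-left corners `(a, b)` and `(a+1, b)`, or the vertical `1×2` rectangle made of the
lattice squares with lower-left corners `(a, b)` and `(a, b+1)`. -/
inductive Domino : Type where
  | horiz : ℤ → ℤ → Domino
  | vert : ℤ → ℤ → Domino
deriving DecidableEq

/-- The two lattice squares occupied by a domino. -/
def Domino.cells : Domino → Finset Cell
  | .horiz a b => {(a, b), (a + 1, b)}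
  | .vert a b => {(a, b), (a, b + 1)}

/-- A domino tiling of the Aztec diamond of rank `m`: a set of dominos all of whose
squares lie in the Aztec diamond, such that every square of the Aztec diamond is covered
by exactly one domino. -/
structure Tiling (m : ℕ) where
  dominos : Finset Domino
  inside : ∀ d ∈ dominos, ∀ c ∈ d.cells, inAD m c
  covers : ∀ c : Cell, inAD m c → ∃! d, d ∈ dominos ∧ c ∈ d.cells

/-- The square `[a,a+1] × [b,b+1]` is gray iff `a + b + m` is even. -/
def grayB (m : ℕ) (c : Cell) : Bool := (c.1 + c.2 + (m : ℤ)) % 2 == 0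

/-- The square `[a,a+1] × [b,b+1]` is white iff `a + b + m` is odd. -/
def whiteB (m : ℕ) (c : Cell) : Bool := ! grayB m c

/-- The (gray-square) interaction relation between a domino `D` of a smaller color and a
domino `D'` of a larger color.  With `s` a gray square, the four configurations are:
(1) `D` vertical with bottom square `s`, `D'` horizontal with right square `s`;
(2) `D`, `D'` vertical dominos on the same two squares, whose top square is gray;
(3) `D` horizontal with right square `s`, `D'` vertical with top square `s`;
(4) `D` vertical with bottom square `s`, `D'` vertical with top square `s`. -/
def interacts (m : ℕ) : Domino → Domino → Bool
  | .vert a b, .horiz a' b' => a' == a - 1 && b' == b && grayB m (a, b)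
  | .horiz a b, .vert a' b' => a' == a + 1 && b' == b - 1 && grayB m (a + 1, b)
  | .vert a b, .vert a' b' =>
      (a' == a && b' == b && grayB m (a, b + 1)) ||
      (a' == a && b' == b - 1 && grayB m (a, b))
  | .horiz _ _, .horiz _ _ => false

/-- The number of interactions of a `k`-tiling: the number of tuples `(i, j, D, D')`
with colors `i < j`, `D` a domino of color `i`, `D'` a domino of color `j`, forming one of
the four interaction configurations. -/
def numInteractions (m k : ℕ) (T : Fin k → Tiling m) : ℕ :=
  ∑ i : Fin k, ∑ j : Fin k,
    if i < j then
      (((T i).dominos ×ˢ (T j).dominos).filter fun p => interacts m p.1 p.2 = true).card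
    else 0

/-- Reflection over the line `y = x`, acting on dominos: the square `[a,a+1]×[b,b+1]`
maps to `[b,b+1]×[a,a+1]`. -/
def Domino.reflect : Domino → Domino
  | .horiz a b => .vert b a
  | .vert a b => .horiz b a

/-! ### Auxiliary definitions and lemmas -/

lemma max_abs_eq (a : ℤ) : max |a| |a + 1| = if 0 ≤ a then a + 1 else -a := by
  rcases le_or_gt 0 a with h | h
  · rw [abs_of_nonneg h, abs_of_nonneg (by omega)]; simp; omega
  · rw [abs_of_neg h, abs_of_nonpos (by omega)]; simp; omega

lemma inAD_iff (m : ℕ) (c : Cell) :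
    inAD m c ↔ (-(m : ℤ) - 1 ≤ c.1 + c.2 ∧ c.1 + c.2 ≤ (m : ℤ) - 1 ∧
      c.1 - c.2 ≤ (m : ℤ) ∧ c.2 - c.1 ≤ (m : ℤ)) := by
  obtain ⟨a, b⟩ := c
  simp only [inAD, max_abs_eq]
  split_ifs <;> omega

instance (m : ℕ) : DecidablePred (inAD m) :=
  fun c => decidable_of_iff _ (inAD_iff m c).symm

def swapc (c : Cell) : Cell := (c.2, c.1)

lemma inAD_swap (m : ℕ) (c : Cell) : inAD m (swapc c) ↔ inAD m c := by
  simp only [inAD_iff, swapc]; omega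

lemma grayB_swap (m : ℕ) (c : Cell) : grayB m (swapc c) = grayB m c := by
  have h : c.2 + c.1 = c.1 + c.2 := add_comm _ _
  simp [grayB, swapc, h]

lemma reflect_reflect (d : Domino) : d.reflect.reflect = d := by cases d <;> rfl

lemma cells_reflect (d : Domino) : d.reflect.cells = d.cells.image swapc := by
  cases d <;> simp [Domino.cells, Domino.reflect, swapc, Finset.image_insert]

def Tiling.reflect {m : ℕ} (A : Tiling m) : Tiling m where
  dominos := A.dominos.image Domino.reflect
  inside := by
    intro d hd c hc
    obtain ⟨e, he, rfl⟩ := Finset.mem_image.mp hd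
    rw [cells_reflect] at hc
    obtain ⟨c', hc', rfl⟩ := Finset.mem_image.mp hc
    exact (inAD_swap m c').mpr (A.inside e he c' hc')
  covers := by
    intro c hc
    obtain ⟨d, ⟨hd, hcd⟩, hu⟩ := A.covers (swapc c) ((inAD_swap m c).mpr hc)
    refine ⟨d.reflect, ⟨Finset.mem_image_of_mem _ hd, ?_⟩, ?_⟩
    · rw [cells_reflect]
      exact Finset.mem_image.mpr ⟨swapc c, hcd, rfl⟩
    · rintro e ⟨he, hce⟩
      obtain ⟨e', he', rfl⟩ := Finset.mem_image.mp he
      have hsc : swapc c ∈ e'.cells := by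
        rw [cells_reflect] at hce
        obtain ⟨c'', hc'', hcc⟩ := Finset.mem_image.mp hce
        have : c'' = swapc c := by
          have := congrArg swapc hcc
          simpa [swapc] using this
        rwa [← this]
      rw [hu e' ⟨he', hsc⟩]

def rtCell : Domino → Cell
  | .horiz a b => (a + 1, b)
  | .vert a b => (a, b + 1)

lemma rtCell_mem (d : Domino) : rtCell d ∈ d.cells := by
  cases d <;> simp [rtCell, Domino.cells]

lemma rtCell_reflect (d : Domino) : rtCell d.reflect = swapc (rtCell d) := by
  cases d <;> rfl

lemma interacts_rt {m : ℕ} {d d' : Domino} (h : interacts m d d' = true) :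
    rtCell d' ∈ d.cells ∧ grayB m (rtCell d') = true := by
  cases d <;> cases d' <;>
    simp [interacts, grayB, rtCell, Domino.cells, Prod.ext_iff] at h ⊢ <;> omega

lemma interacts_reflect_iff {m : ℕ} {d d' : Domino} (hg : grayB m (rtCell d') = true)
    (hd : rtCell d' ∈ d.cells) :
    interacts m d.reflect d'.reflect = true ↔ ¬ interacts m d d' = true := by
  cases d <;> cases d' <;>
    simp [interacts, Domino.reflect, grayB, rtCell, Domino.cells, Prod.ext_iff] at hg hd ⊢ <;>
    omega

noncomputable def ADcells (m : ℕ) : Finset Cell :=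
  (Finset.Icc (-(m : ℤ) - 1) (m : ℤ) ×ˢ Finset.Icc (-(m : ℤ) - 1) (m : ℤ)).filter
    (fun c => inAD m c)

lemma mem_ADcells {m : ℕ} {c : Cell} : c ∈ ADcells m ↔ inAD m c := by
  simp only [ADcells, Finset.mem_filter, Finset.mem_product, Finset.mem_Icc,
    and_iff_right_iff_imp]
  intro h
  rw [inAD_iff] at h
  omega

/-- row bounds -/
def rlo (m : ℕ) (b : ℤ) : ℤ := if 0 ≤ b then b - m else -(m : ℤ) - b - 1
def rhi (m : ℕ) (b : ℤ) : ℤ := if 0 ≤ b then (m : ℤ) - b - 1 else (m : ℤ) + b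

noncomputable def row (m : ℕ) (b : ℤ) : Finset Cell :=
  (Finset.Icc (rlo m b) (rhi m b)).image (fun a => (a, b))

lemma AD_rows (m : ℕ) :
    ADcells m = (Finset.Icc (-(m : ℤ) - 1) (m : ℤ)).biUnion (row m) := by
  ext c
  obtain ⟨a, b⟩ := c
  simp only [mem_ADcells, inAD_iff, Finset.mem_biUnion, Finset.mem_Icc, row,
    Finset.mem_image, Finset.mem_Icc, Prod.mk.injEq]
  constructor
  · intro h
    refine ⟨b, by omega, a, ?_, rfl, rfl⟩
    simp only [rlo, rhi]; split_ifs <;> omega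
  · rintro ⟨b', hb', a', ha', rfl, rfl⟩
    simp only [rlo, rhi] at ha'; split_ifs at ha' <;> omega

lemma rows_disjoint (m : ℕ) :
    (↑(Finset.Icc (-(m : ℤ) - 1) (m : ℤ)) : Set ℤ).PairwiseDisjoint (row m) := by
  intro b _ b' _ hne
  rw [Function.onFun, Finset.disjoint_left]
  rintro ⟨x, y⟩ hx hy
  simp only [row, Finset.mem_image, Finset.mem_Icc, Prod.mk.injEq] at hx hy
  obtain ⟨a1, -, -, h1⟩ := hx
  obtain ⟨a2, -, -, h2⟩ := hy
  exact hne (by omega)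

lemma card_row (m : ℕ) (b : ℤ) :
    (row m b).card = (rhi m b + 1 - rlo m b).toNat := by
  rw [row, Finset.card_image_of_injective _ (fun x y h => by simpa using h)]
  exact Int.card_Icc _ _

lemma Icc_split (m : ℕ) :
    Finset.Icc (-(m : ℤ) - 1) (m : ℤ) =
      ((Finset.range (m + 1)).image (fun i : ℕ => -(i : ℤ) - 1)) ∪
        ((Finset.range (m + 1)).image (fun i : ℕ => (i : ℤ))) := by
  ext x
  simp only [Finset.mem_Icc, Finset.mem_union, Finset.mem_image, Finset.mem_range]
  constructor
  · intro h
    rcases le_or_gt 0 x with hx | hx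
    · right; exact ⟨x.toNat, by omega, by omega⟩
    · left; exact ⟨(-x - 1).toNat, by omega, by omega⟩
  · rintro (⟨i, hi, rfl⟩ | ⟨i, hi, rfl⟩) <;> omega

lemma sum_Icc_split {X : Type*} [AddCommMonoid X] (m : ℕ) (f : ℤ → X) :
    (∑ b ∈ Finset.Icc (-(m : ℤ) - 1) (m : ℤ), f b) =
      (∑ i ∈ Finset.range (m + 1), f (-(i : ℤ) - 1)) +
        (∑ i ∈ Finset.range (m + 1), f (i : ℤ)) := by
  rw [Icc_split m, Finset.sum_union, Finset.sum_image (by intros x _ y _ h; simpa using h),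
    Finset.sum_image (by intros x _ y _ h; simpa using h)]
  rw [Finset.disjoint_left]
  rintro x hx hy
  simp only [Finset.mem_image, Finset.mem_range] at hx hy
  obtain ⟨i, -, rfl⟩ := hx
  obtain ⟨j, -, hj⟩ := hy
  omega

lemma gauss (m : ℕ) : ∑ i ∈ Finset.range (m + 1), (m - i) = m * (m + 1) / 2 := by
  have h1 : ∑ i ∈ Finset.range (m + 1), (m - i) = ∑ i ∈ Finset.range (m + 1), i := by
    simpa using Finset.sum_range_reflect (fun j => j) (m + 1)
  have h2 := Finset.sum_range_id_mul_two (m + 1)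
  simp only [Nat.add_sub_cancel] at h2
  rw [Nat.mul_comm (m + 1) m] at h2
  rw [h1]
  omega

lemma card_AD (m : ℕ) : (ADcells m).card = 2 * (m * (m + 1)) := by
  rw [AD_rows, Finset.card_biUnion (fun x hx y hy hne =>
    rows_disjoint m (Finset.mem_coe.mpr hx) (Finset.mem_coe.mpr hy) hne)]
  rw [Finset.sum_congr rfl (fun b _ => card_row m b),
    sum_Icc_split m (fun b => (rhi m b + 1 - rlo m b).toNat)]
  have e1 : ∀ i ∈ Finset.range (m + 1),
      (rhi m (-(i : ℤ) - 1) + 1 - rlo m (-(i : ℤ) - 1)).toNat = 2 * (m - i) := by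
    intro i hi
    simp only [Finset.mem_range] at hi
    simp only [rlo, rhi]
    split_ifs <;> omega
  have e2 : ∀ i ∈ Finset.range (m + 1),
      (rhi m (i : ℤ) + 1 - rlo m (i : ℤ)).toNat = 2 * (m - i) := by
    intro i hi
    simp only [Finset.mem_range] at hi
    simp only [rlo, rhi]
    split_ifs <;> omega
  rw [Finset.sum_congr rfl e1, Finset.sum_congr rfl e2, ← Finset.mul_sum, gauss]
  have h4 : 2 * (m * (m + 1) / 2) = m * (m + 1) :=
    Nat.mul_div_cancel' (Nat.even_mul_succ_self m).two_dvd
  omega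

/-- The alternating potential summand. -/
def gg (n : ℤ) : ℤ := (if n % 2 = 0 then (1 : ℤ) else -1) * ((n + 1) / 2)

def epsh (m : ℕ) (c : Cell) : ℤ := gg (c.1 + c.2 + (m : ℤ))

lemma Icc_top (a k : ℤ) (h : a ≤ k + 1) :
    Finset.Icc a (k + 1) = insert (k + 1) (Finset.Icc a k) := by
  ext x; simp only [Finset.mem_Icc, Finset.mem_insert]; omega

lemma alt_sum (L : ℕ) : ∀ n0 : ℤ, -1 ≤ n0 →
    (∑ n ∈ Finset.Icc n0 (n0 + 2 * (L : ℤ) - 1), gg n) =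
      if n0 % 2 = 0 then -(L : ℤ) else 0 := by
  induction L with
  | zero =>
    intro n0 h
    rw [Finset.Icc_eq_empty (by omega), Finset.sum_empty]
    split_ifs <;> simp
  | succ L ih =>
    intro n0 h
    have h1 : n0 + 2 * ((L + 1 : ℕ) : ℤ) - 1 = (n0 + 2 * (L : ℤ) - 1) + 1 + 1 := by
      push_cast; ring
    rw [h1, Icc_top _ _ (by omega), Finset.sum_insert (by simp only [Finset.mem_Icc]; omega),
      Icc_top _ _ (by omega), Finset.sum_insert (by simp only [Finset.mem_Icc]; omega),
      ih n0 h]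
    simp only [gg]
    split_ifs <;> push_cast <;> omega

lemma shift_sum (t lo hi : ℤ) (f : ℤ → ℤ) :
    (∑ a ∈ Finset.Icc lo hi, f (a + t)) = ∑ n ∈ Finset.Icc (lo + t) (hi + t), f n := by
  have himg : (Finset.Icc lo hi).image (fun a => a + t) = Finset.Icc (lo + t) (hi + t) := by
    ext x
    simp only [Finset.mem_image, Finset.mem_Icc]
    constructor
    · rintro ⟨a, ha, rfl⟩; omega
    · intro hx; exact ⟨x - t, by omega, by omega⟩
  rw [← himg, Finset.sum_image (by intros x _ y _ h; simpa using h)]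

lemma sum_epsh (m : ℕ) :
    (∑ c ∈ ADcells m, epsh m c) = -((m * (m + 1) / 2 : ℕ) : ℤ) := by
  rw [AD_rows, Finset.sum_biUnion (rows_disjoint m)]
  have hrow : ∀ b : ℤ, (∑ c ∈ row m b, epsh m c) =
      ∑ a ∈ Finset.Icc (rlo m b) (rhi m b), gg (a + (b + (m : ℤ))) := by
    intro b
    rw [row, Finset.sum_image (by intros x _ y _ h; simpa using h)]
    apply Finset.sum_congr rfl
    intro a _
    simp only [epsh]
    congr 1
    ring
  rw [Finset.sum_congr rfl (fun b _ => hrow b)]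
  have hinner : ∀ b ∈ Finset.Icc (-(m : ℤ) - 1) (m : ℤ),
      (∑ a ∈ Finset.Icc (rlo m b) (rhi m b), gg (a + (b + (m : ℤ)))) =
        if 0 ≤ b then -((m : ℤ) - b) else 0 := by
    intro b hb
    simp only [Finset.mem_Icc] at hb
    rw [shift_sum]
    by_cases h0 : 0 ≤ b
    · have hL : rhi m b + (b + (m : ℤ)) =
          (rlo m b + (b + (m : ℤ))) + 2 * ((((m : ℤ) - b).toNat : ℕ) : ℤ) - 1 := by
        simp only [rlo, rhi, if_pos h0]; omega
      have hn0 : (-1 : ℤ) ≤ rlo m b + (b + (m : ℤ)) := by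
        simp only [rlo, if_pos h0]; omega
      rw [hL, alt_sum _ _ hn0, if_pos (by simp only [rlo, if_pos h0]; omega),
        if_pos h0]
      omega
    · have hL : rhi m b + (b + (m : ℤ)) =
          (rlo m b + (b + (m : ℤ))) + 2 * ((((m : ℤ) + b + 1).toNat : ℕ) : ℤ) - 1 := by
        simp only [rlo, rhi, if_neg h0]; omega
      have hn0 : (-1 : ℤ) ≤ rlo m b + (b + (m : ℤ)) := by
        simp only [rlo, if_neg h0]; omega
      rw [hL, alt_sum _ _ hn0, if_neg (by simp only [rlo, if_neg h0]; omega),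
        if_neg h0]
  rw [Finset.sum_congr rfl hinner,
    sum_Icc_split m (fun b => if 0 ≤ b then -((m : ℤ) - b) else 0)]
  have hneg : (∑ i ∈ Finset.range (m + 1),
      (if (0 : ℤ) ≤ -(i : ℤ) - 1 then -((m : ℤ) - (-(i : ℤ) - 1)) else 0)) = 0 :=
    Finset.sum_eq_zero (fun i _ => if_neg (by omega))
  have hpos : (∑ i ∈ Finset.range (m + 1),
      (if (0 : ℤ) ≤ (i : ℤ) then -((m : ℤ) - (i : ℤ)) else 0)) =
        -((m * (m + 1) / 2 : ℕ) : ℤ) := by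
    rw [Finset.sum_congr rfl (fun i _ => if_pos (by omega))]
    have e : ∀ i ∈ Finset.range (m + 1), -((m : ℤ) - (i : ℤ)) = -(((m - i : ℕ) : ℕ) : ℤ) := by
      intro i hi
      simp only [Finset.mem_range] at hi
      omega
    rw [Finset.sum_congr rfl e, Finset.sum_neg_distrib, ← Nat.cast_sum, gauss]
  rw [hneg, hpos, zero_add]

lemma domino_sum {m : ℕ} (d : Domino) (h : ∀ c ∈ d.cells, inAD m c) :
    (if grayB m (rtCell d) = true then (1 : ℤ) else 0) = (∑ c ∈ d.cells, epsh m c) + 1 := by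
  cases d with
  | horiz a b =>
    have h1 := h (a, b) (by simp [Domino.cells])
    rw [inAD_iff] at h1
    rw [show (Domino.horiz a b).cells = {(a, b), (a + 1, b)} from rfl,
      Finset.sum_pair (by simp)]
    simp only [rtCell, epsh, gg, grayB, beq_iff_eq]
    norm_num
    split_ifs <;> omega
  | vert a b =>
    have h1 := h (a, b) (by simp [Domino.cells])
    rw [inAD_iff] at h1
    rw [show (Domino.vert a b).cells = {(a, b), (a, b + 1)} from rfl,
      Finset.sum_pair (by simp)]
    simp only [rtCell, epsh, gg, grayB, beq_iff_eq]
    norm_num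
    split_ifs <;> omega

lemma disjoint_cells {m : ℕ} (B : Tiling m) :
    (↑B.dominos : Set Domino).PairwiseDisjoint Domino.cells := by
  intro d hd e he hne
  rw [Function.onFun, Finset.disjoint_left]
  intro c hcd hce
  exact hne ((B.covers c (B.inside d (Finset.mem_coe.mp hd) c hcd)).unique
    ⟨Finset.mem_coe.mp hd, hcd⟩ ⟨Finset.mem_coe.mp he, hce⟩)

lemma biUnion_cells {m : ℕ} (B : Tiling m) :
    B.dominos.biUnion Domino.cells = ADcells m := by
  ext c
  simp only [Finset.mem_biUnion, mem_ADcells]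
  constructor
  · rintro ⟨d, hd, hc⟩; exact B.inside d hd c hc
  · intro hc
    obtain ⟨d, ⟨hd, hcd⟩, -⟩ := B.covers c hc
    exact ⟨d, hd, hcd⟩

lemma card_cells (d : Domino) : d.cells.card = 2 := by
  cases d <;>
    · rw [show Domino.cells _ = {_, _} from rfl, Finset.card_pair (by simp)]

lemma card_dominos {m : ℕ} (B : Tiling m) : 2 * B.dominos.card = (ADcells m).card := by
  rw [← biUnion_cells B, Finset.card_biUnion (fun x hx y hy hne =>
    disjoint_cells B (Finset.mem_coe.mpr hx) (Finset.mem_coe.mpr hy) hne)]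
  rw [Finset.sum_congr rfl (fun d _ => card_cells d), Finset.sum_const, smul_eq_mul,
    Nat.mul_comm]

lemma topGray_card {m : ℕ} (B : Tiling m) :
    (B.dominos.filter fun d => grayB m (rtCell d) = true).card = m * (m + 1) / 2 := by
  have key : ((B.dominos.filter fun d => grayB m (rtCell d) = true).card : ℤ)
      = (∑ c ∈ ADcells m, epsh m c) + B.dominos.card := by
    rw [← Finset.sum_boole,
      Finset.sum_congr rfl (fun d hd => domino_sum d (B.inside d hd)),
      Finset.sum_add_distrib, Finset.sum_const, ← biUnion_cells B,
      Finset.sum_biUnion (disjoint_cells B)]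
    simp
  have h1 := card_dominos B
  rw [card_AD] at h1
  have h2 : 2 * (m * (m + 1) / 2) = m * (m + 1) :=
    Nat.mul_div_cancel' (Nat.even_mul_succ_self m).two_dvd
  rw [sum_epsh] at key
  omega

lemma pair_count {m : ℕ} (A B : Tiling m) :
    ((A.dominos ×ˢ B.dominos).filter fun p => interacts m p.1 p.2 = true).card
      + ((A.reflect.dominos ×ˢ B.reflect.dominos).filter
          fun p => interacts m p.1 p.2 = true).card
      = (B.dominos.filter fun d => grayB m (rtCell d) = true).card := by
  classical
  set X : Finset (Cell × Domino × Domino) :=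
    ((ADcells m) ×ˢ (A.dominos ×ˢ B.dominos)).filter
      (fun q => q.1 ∈ q.2.1.cells ∧ q.1 = rtCell q.2.2 ∧ grayB m q.1 = true) with hX
  have hmemX : ∀ q : Cell × Domino × Domino, q ∈ X ↔
      (q.2.1 ∈ A.dominos ∧ q.2.2 ∈ B.dominos ∧ q.1 ∈ q.2.1.cells ∧
        q.1 = rtCell q.2.2 ∧ grayB m q.1 = true) := by
    intro q
    simp only [hX, Finset.mem_filter, Finset.mem_product, mem_ADcells]
    constructor
    · rintro ⟨⟨h1, h2, h3⟩, h4⟩; exact ⟨h2, h3, h4⟩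
    · rintro ⟨h1, h2, h3, h4, h5⟩
      exact ⟨⟨by rw [h4]; exact B.inside _ h2 _ (rtCell_mem _), h1, h2⟩, h3, h4, h5⟩
  have step1 : (X.filter fun q => interacts m q.2.1 q.2.2 = true).card
      = ((A.dominos ×ˢ B.dominos).filter fun p => interacts m p.1 p.2 = true).card := by
    apply Finset.card_bij (fun q _ => q.2)
    · rintro q hq
      rw [Finset.mem_filter] at hq
      obtain ⟨hqX, hint⟩ := hq
      rw [hmemX] at hqX
      simp only [Finset.mem_filter, Finset.mem_product]
      exact ⟨⟨hqX.1, hqX.2.1⟩, hint⟩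
    · rintro q1 hq1 q2 hq2 heq
      rw [Finset.mem_filter, hmemX] at hq1 hq2
      have e1 : q1.1 = rtCell q1.2.2 := hq1.1.2.2.2.1
      have e2 : q2.1 = rtCell q2.2.2 := hq2.1.2.2.2.1
      have h22 : q1.2.2 = q2.2.2 := congrArg Prod.snd heq
      exact Prod.ext (by rw [e1, e2, h22]) heq
    · rintro p hp
      simp only [Finset.mem_filter, Finset.mem_product] at hp
      obtain ⟨⟨hpA, hpB⟩, hint⟩ := hp
      obtain ⟨hc, hg⟩ := interacts_rt hint
      refine ⟨(rtCell p.2, p), ?_, rfl⟩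
      rw [Finset.mem_filter, hmemX]
      exact ⟨⟨hpA, hpB, hc, rfl, hg⟩, hint⟩
  have step2 : (X.filter fun q => ¬ interacts m q.2.1 q.2.2 = true).card
      = ((A.reflect.dominos ×ˢ B.reflect.dominos).filter
          fun p => interacts m p.1 p.2 = true).card := by
    apply Finset.card_bij (fun q _ => (q.2.1.reflect, q.2.2.reflect))
    · rintro q hq
      rw [Finset.mem_filter] at hq
      obtain ⟨hqX, hnint⟩ := hq
      rw [hmemX] at hqX
      obtain ⟨hA, hB, hcell, heq, hg⟩ := hqX
      simp only [Finset.mem_filter, Finset.mem_product]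
      refine ⟨⟨Finset.mem_image_of_mem _ hA, Finset.mem_image_of_mem _ hB⟩, ?_⟩
      exact (interacts_reflect_iff (heq ▸ hg) (heq ▸ hcell)).mpr hnint
    · rintro q1 hq1 q2 hq2 heq
      rw [Finset.mem_filter, hmemX] at hq1 hq2
      simp only [Prod.mk.injEq] at heq
      have h1 : q1.2.1 = q2.2.1 := by
        have := congrArg Domino.reflect heq.1
        rwa [reflect_reflect, reflect_reflect] at this
      have h2 : q1.2.2 = q2.2.2 := by
        have := congrArg Domino.reflect heq.2
        rwa [reflect_reflect, reflect_reflect] at this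
      exact Prod.ext (by rw [hq1.1.2.2.2.1, hq2.1.2.2.2.1, h2]) (Prod.ext h1 h2)
    · rintro p hp
      simp only [Finset.mem_filter, Finset.mem_product] at hp
      obtain ⟨⟨hpA, hpB⟩, hint⟩ := hp
      obtain ⟨d0, hd0, hp1⟩ := Finset.mem_image.mp hpA
      obtain ⟨d0', hd0', hp2⟩ := Finset.mem_image.mp hpB
      have hint' : interacts m d0.reflect d0'.reflect = true := by
        rw [hp1, hp2]; exact hint
      obtain ⟨hc, hg⟩ := interacts_rt hint'
      rw [rtCell_reflect] at hc hg
      have hcell : rtCell d0' ∈ d0.cells := by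
        rw [cells_reflect] at hc
        obtain ⟨c', hc', hcc⟩ := Finset.mem_image.mp hc
        have : c' = rtCell d0' := by
          have := congrArg swapc hcc
          simpa [swapc] using this
        rwa [← this]
      have hg' : grayB m (rtCell d0') = true := by rw [← grayB_swap]; exact hg
      have hnint := (interacts_reflect_iff hg' hcell).mp hint'
      refine ⟨(rtCell d0', d0, d0'), ?_, ?_⟩
      · rw [Finset.mem_filter, hmemX]
        exact ⟨⟨hd0, hd0', hcell, rfl, hg'⟩, hnint⟩
      · rw [hp1, hp2]
  have step3 : X.card = (B.dominos.filter fun d => grayB m (rtCell d) = true).card := by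
    apply Finset.card_bij (fun q _ => q.2.2)
    · intro q hq
      rw [hmemX] at hq
      simp only [Finset.mem_filter]
      exact ⟨hq.2.1, hq.2.2.2.1 ▸ hq.2.2.2.2⟩
    · intro q1 hq1 q2 hq2 heq
      rw [hmemX] at hq1 hq2
      have e : q1.1 = q2.1 := by rw [hq1.2.2.2.1, hq2.2.2.2.1, heq]
      have hAD : inAD m q1.1 := by
        rw [hq1.2.2.2.1]; exact B.inside _ hq1.2.1 _ (rtCell_mem _)
      have e2 : q1.2.1 = q2.2.1 :=
        (A.covers q1.1 hAD).unique ⟨hq1.1, hq1.2.2.1⟩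
          ⟨hq2.1, by rw [e]; exact hq2.2.2.1⟩
      exact Prod.ext e (Prod.ext e2 heq)
    · intro d' hd'
      simp only [Finset.mem_filter] at hd'
      obtain ⟨hdB, hdg⟩ := hd'
      have hAD : inAD m (rtCell d') := B.inside _ hdB _ (rtCell_mem _)
      obtain ⟨d, ⟨hdA, hdc⟩, -⟩ := A.covers (rtCell d') hAD
      exact ⟨(rtCell d', d, d'), by rw [hmemX]; exact ⟨hdA, hdB, hdc, rfl, hdg⟩, rfl⟩
  rw [← step1, ← step2, ← step3]
  exact Finset.card_filter_add_card_filter_not _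

/-- If `T` is a `k`-tiling of the Aztec diamond of rank `m` with `j` interactions, then
its reflection `φ(T)` over the line `y = x` is again a `k`-tiling of the Aztec diamond of
rank `m`, with `(k choose 2)·(m+1 choose 2) − j` interactions. -/
theorem reflect_interactions (k m : ℕ) (hk : 1 ≤ k) (hm : 1 ≤ m) (T : Fin k → Tiling m) :
    ∃ T' : Fin k → Tiling m,
      (∀ c : Fin k, (T' c).dominos = (T c).dominos.image Domino.reflect) ∧
      (numInteractions m k T' : ℤ) =
        ((k * (k - 1) / 2) * (m * (m + 1) / 2) : ℕ) - (numInteractions m k T : ℤ) := by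
  refine ⟨fun c => (T c).reflect, fun c => rfl, ?_⟩
  have key : numInteractions m k (fun c => (T c).reflect) + numInteractions m k T
      = (k * (k - 1) / 2) * (m * (m + 1) / 2) := by
    have h1 : numInteractions m k (fun c => (T c).reflect) + numInteractions m k T
        = ∑ i : Fin k, ∑ j : Fin k, (if i < j then m * (m + 1) / 2 else 0) := by
      rw [numInteractions, numInteractions, ← Finset.sum_add_distrib]
      apply Finset.sum_congr rfl
      intro i _
      rw [← Finset.sum_add_distrib]
      apply Finset.sum_congr rfl
      intro j _
      split_ifs with h
      · rw [Nat.add_comm, ← topGray_card (T j)]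
        exact pair_count (T i) (T j)
      · rfl
    rw [h1, Finset.sum_comm]
    have h2 : ∀ j : Fin k,
        (∑ i : Fin k, if i < j then m * (m + 1) / 2 else 0)
          = j.val * (m * (m + 1) / 2) := by
      intro j
      rw [← Finset.sum_filter, Finset.sum_const, smul_eq_mul]
      congr 1
      have hio : (Finset.univ.filter (fun i : Fin k => i < j)) = Finset.Iio j := by
        ext i; simp
      rw [hio]; exact Fin.card_Iio j
    rw [Finset.sum_congr rfl (fun j _ => h2 j), ← Finset.sum_mul]
    congr 1
    rw [Fin.sum_univ_eq_sum_range (fun i => i) k, Finset.sum_range_id]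
  have hcast := congrArg (Nat.cast : ℕ → ℤ) key
  push_cast at hcast ⊢
  linarith

end Aztec
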